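/- arXiv:1710.07681 — 2 statements merged into one kernel-verified Lean document; each statement's English description precedes it below -/
import Mathlib

section
/- If x' lies in the closure of the orbit of x under the shift, then spec(H_{x'}) ⊆ spec(H_x), for a strongly pattern equivariant family of Schrödinger operators. Consequently, if the subshift (X, α) is minimal, then spec(H_x) is the same for all x ∈ X. -/
open scoped BigOperators ComplexConjugate

noncomputable section

/-- The Hilbert space `ℓ²(ℤ)`. -/
abbrev ℓ2Z : Type := lp (fun _ : ℤ => ℂ) 2

/-- The strongly pattern equivariant function `b̃ₓ(n) = b(x_{n-r}, …, x_{n+r})`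
associated to a sliding block code `b : A^{2r+1} → ℂ`. -/
def blockEval {A : Set ℝ} (r : ℕ) (b : (Fin (2 * r + 1) → A) → ℂ)
    (x : ℤ → A) (n : ℤ) : ℂ :=
  b (fun i => x (n - r + i))

/-- The shift of a sequence by `m ∈ ℤ`. -/
def shiftBy {A : Set ℝ} (m : ℤ) (x : ℤ → A) : ℤ → A := fun n => x (n + m)

/-! If `λ ∉ spec(H_x)`, then `λ - H_x` is bounded below, and since `H_{α^m x}` is conjugate to
`H_x` by the translation by `m` on `ℓ²(ℤ)`, the operators `λ - H_{α^m x}` are bounded below with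
one and the same constant. On finitely supported vectors `H_y ψ` depends continuously on `y`, so
this bound passes to every `x'` in the orbit closure of `x`, and then by density to all of
`ℓ²(ℤ)`. As `H_{x'}` is self-adjoint, `λ - H_{x'}` is normal, and a normal operator which is
bounded below is invertible: `λ ∉ spec(H_{x'})`. -/

open scoped NNReal ENNReal

theorem Memℓp.comp_equiv {ι κ E : Type*} [NormedAddCommGroup E] {p : ℝ≥0∞} (hp : 0 < p.toReal)
    {f : κ → E} (hf : Memℓp f p) (e : ι ≃ κ) : Memℓp (f ∘ e) p :=
  memℓp_gen ((e.summable_iff (f := fun n => ‖f n‖ ^ p.toReal)).2 (hf.summable hp))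

def lp.compEquiv {𝕜 ι κ E : Type*} [NormedField 𝕜] [NormedAddCommGroup E] [NormedSpace 𝕜 E]
    {p : ℝ≥0∞} [Fact (1 ≤ p)] (hp : 0 < p.toReal) (e : ι ≃ κ) :
    lp (fun _ : κ => E) p ≃ₗᵢ[𝕜] lp (fun _ : ι => E) p where
  toFun ψ := ⟨ψ ∘ e, (lp.memℓp ψ).comp_equiv hp e⟩
  invFun ψ := ⟨ψ ∘ e.symm, (lp.memℓp ψ).comp_equiv hp e.symm⟩
  left_inv ψ := lp.ext <| funext fun n => by simp
  right_inv ψ := lp.ext <| funext fun n => by simp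
  map_add' ψ φ := rfl
  map_smul' c ψ := rfl
  norm_map' ψ := by
    rw [lp.norm_eq_tsum_rpow hp, lp.norm_eq_tsum_rpow hp]
    exact congrArg (· ^ _) (e.tsum_eq fun n => ‖ψ n‖ ^ p.toReal)

theorem ContinuousLinearMap.IsStarNormal.isUnit_iff_exists_antilipschitzWith
    {𝕜 E : Type*} [RCLike 𝕜] [NormedAddCommGroup E] [InnerProductSpace 𝕜 E] [CompleteSpace E]
    {T : E →L[𝕜] E} (hT : IsStarNormal T) : IsUnit T ↔ ∃ K, AntilipschitzWith K T := by
  rw [isUnit_iff_bijective, bijective_iff_dense_range_and_antilipschitz, and_iff_right_iff_imp]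
  rintro ⟨K, hK⟩
  rw [Submodule.topologicalClosure_eq_top_iff,
    ContinuousLinearMap.IsStarNormal.orthogonal_range hT, LinearMap.ker_eq_bot]
  exact hK.injective

theorem IsStarNormal.algebraMap_sub {R A : Type*} [CommSemiring R] [StarRing R] [Ring A]
    [StarRing A] [Algebra R A] [StarModule R A] (z : R) {a : A} (ha : IsStarNormal a) :
    IsStarNormal (algebraMap R A z - a) := by
  rw [Algebra.algebraMap_eq_smul_one]
  exact (Commute.smul_left (Commute.one_left _) z).isStarNormal_sub

theorem AntilipschitzWith.conj_linearIsometryEquiv {𝕜 E F : Type*} [NormedField 𝕜]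
    [SeminormedAddCommGroup E] [SeminormedAddCommGroup F] [NormedSpace 𝕜 E] [NormedSpace 𝕜 F]
    (U : E ≃ₗᵢ[𝕜] F) {K : ℝ≥0} {T : E → E} (hT : AntilipschitzWith K T) :
    AntilipschitzWith K (U ∘ T ∘ U.symm) := by
  simpa using U.isometry.antilipschitz.comp (hT.comp U.symm.isometry.antilipschitz)

theorem antilipschitzWith_of_mem_closure {𝕜 Y E F : Type*} [NormedField 𝕜] [TopologicalSpace Y]
    [SeminormedAddCommGroup E] [SeminormedAddCommGroup F] [NormedSpace 𝕜 E] [NormedSpace 𝕜 F]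
    {T : Y → E →L[𝕜] F} (hT : Dense {v | Continuous fun y => T y v}) {s : Set Y} {K : ℝ≥0}
    (hs : ∀ y ∈ s, AntilipschitzWith K (T y)) {y : Y} (hy : y ∈ closure s) :
    AntilipschitzWith K (T y) := by
  have hclosed : ∀ y', IsClosed {v | ‖v‖ ≤ K * ‖T y' v‖} := fun y' =>
    isClosed_le continuous_norm (continuous_const.mul (T y').continuous.norm)
  refine (T y).antilipschitz_of_bound fun v => ?_
  suffices {v | Continuous fun y => T y v} ⊆ {v | ‖v‖ ≤ K * ‖T y v‖} from
    (hclosed y).closure_subset_iff.2 this (hT.closure_eq ▸ Set.mem_univ v)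
  intro w hw
  have : IsClosed {y' | ‖w‖ ≤ K * ‖T y' w‖} :=
    isClosed_le continuous_const (continuous_const.mul hw.norm)
  exact this.closure_subset_iff.2 (fun y' hy' => (hs y' hy').le_mul_norm (map_zero _) w) hy

theorem lp.dense_setOf_continuous_apply {𝕜 ι Y F : Type*} {E : ι → Type*} [NormedField 𝕜]
    [DecidableEq ι] [TopologicalSpace Y] [∀ i, NormedAddCommGroup (E i)] [∀ i, NormedSpace 𝕜 (E i)]
    [AddCommGroup F] [Module 𝕜 F] [TopologicalSpace F] [IsTopologicalAddGroup F]
    {p : ℝ≥0∞} [Fact (1 ≤ p)] (hp : p ≠ ∞) {T : Y → lp E p →L[𝕜] F}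
    (hT : ∀ i a, Continuous fun y => T y (lp.single p i a)) :
    Dense {v | Continuous fun y => T y v} := by
  intro v
  refine mem_closure_of_tendsto (lp.hasSum_single hp v) (Filter.Eventually.of_forall fun s => ?_)
  simpa only [Set.mem_ofPred_eq, map_sum] using continuous_finsetSum s fun i _ => hT i (v i)

theorem lp.isSelfAdjoint_of_single {𝕜 ι : Type*} [RCLike 𝕜] [DecidableEq ι]
    {T : lp (fun _ : ι => 𝕜) 2 →L[𝕜] lp (fun _ : ι => 𝕜) 2}
    (hT : ∀ i j, conj (T (lp.single 2 i 1) j) = T (lp.single 2 j 1) i) : IsSelfAdjoint T := by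
  rw [ContinuousLinearMap.isSelfAdjoint_iff']
  refine lp.ext_continuousLinearMap (by simp) fun j => ContinuousLinearMap.ext_ring ?_
  ext i
  rw [ContinuousLinearMap.comp_apply, ContinuousLinearMap.comp_apply,
    lp.singleContinuousLinearMap_apply]
  have := ContinuousLinearMap.adjoint_inner_right T (lp.single 2 i 1) (lp.single 2 j 1)
  rw [lp.inner_single_left, lp.inner_single_right] at this
  simpa only [RCLike.inner_apply', map_one, one_mul, mul_one, hT] using this

theorem blockEval_shiftBy {A : Set ℝ} (r : ℕ) (c : (Fin (2 * r + 1) → A) → ℂ) (m : ℤ)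
    (x : ℤ → A) (n : ℤ) : blockEval r c (shiftBy m x) n = blockEval r c x (n + m) := by
  simp only [blockEval, shiftBy]
  congr 2 with i
  ring_nf

theorem continuous_blockEval {A : Set ℝ} (r : ℕ) {c : (Fin (2 * r + 1) → A) → ℂ}
    (hc : Continuous c) (n : ℤ) : Continuous fun x : ℤ → A => blockEval r c x n :=
  hc.comp (continuous_pi fun _ => continuous_apply _)

abbrev IsPatternEquivariantFamily {A : Set ℝ} (r : ℕ) (S : Finset ℕ)
    (b : ℕ → (Fin (2 * r + 1) → A) → ℂ) (H : (ℤ → A) → (ℓ2Z →L[ℂ] ℓ2Z)) : Prop :=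
  ∀ (x : ℤ → A) (ψ : ℓ2Z) (n : ℤ), (H x ψ) n = ∑ k ∈ S, (blockEval r (b k) x n * ψ (n + k)
    + conj (blockEval r (b k) x (n - k)) * ψ (n - k))

def shiftℓ2 (m : ℤ) : ℓ2Z ≃ₗᵢ[ℂ] ℓ2Z := lp.compEquiv (by norm_num) (Equiv.addRight m)

@[simp]
theorem shiftℓ2_apply (m : ℤ) (ψ : ℓ2Z) (n : ℤ) : shiftℓ2 m ψ n = ψ (n + m) := rfl

@[simp]
theorem shiftℓ2_symm_apply (m : ℤ) (ψ : ℓ2Z) (n : ℤ) : (shiftℓ2 m).symm ψ n = ψ (n - m) :=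
  rfl

namespace IsPatternEquivariantFamily

variable {A : Set ℝ} {r : ℕ} {S : Finset ℕ} {b : ℕ → (Fin (2 * r + 1) → A) → ℂ}
  {H : (ℤ → A) → (ℓ2Z →L[ℂ] ℓ2Z)}

theorem apply_shiftBy (hH : IsPatternEquivariantFamily r S b H) (m : ℤ) (x : ℤ → A) (ψ : ℓ2Z) :
    H (shiftBy m x) ψ = shiftℓ2 m (H x ((shiftℓ2 m).symm ψ)) := by
  ext n
  simp only [hH, shiftℓ2_apply, shiftℓ2_symm_apply, blockEval_shiftBy]
  refine Finset.sum_congr rfl fun k _ => ?_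
  ring_nf

theorem apply_single (hH : IsPatternEquivariantFamily r S b H) (x : ℤ → A) (i : ℤ) (a : ℂ) :
    H x (lp.single 2 i a) = ∑ k ∈ S, (lp.single 2 (i - k) (blockEval r (b k) x (i - k) * a)
      + lp.single 2 (i + k) (conj (blockEval r (b k) x i) * a)) := by
  ext n
  simp only [hH, lp.coeFn_sum, Finset.sum_apply, lp.coeFn_add, Pi.add_apply, lp.coeFn_single]
  refine Finset.sum_congr rfl fun k _ => congrArg₂ (· + ·) ?_ ?_
  · rcases eq_or_ne (n + k) i with rfl | h
    · simp
    · have : n ≠ i - k := by omega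
      simp [h, this]
  · rcases eq_or_ne (n - k) i with rfl | h
    · simp
    · have : n ≠ i + k := by omega
      simp [h, this]

theorem isSelfAdjoint (hH : IsPatternEquivariantFamily r S b H) (x : ℤ → A) :
    IsSelfAdjoint (H x) := by
  refine lp.isSelfAdjoint_of_single fun i j => ?_
  simp only [hH, map_sum, map_add, lp.coeFn_single]
  refine Finset.sum_congr rfl fun k _ => (add_comm _ _).trans (congrArg₂ (· + ·) ?_ ?_)
  · rcases eq_or_ne (j - k) i with rfl | h
    · simp
    · have : i + k ≠ j := by omega
      simp [h, this]
  · rcases eq_or_ne (j + k) i with rfl | h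
    · simp
    · have : i - k ≠ j := by omega
      simp [h, this]

theorem continuous_apply_single (hH : IsPatternEquivariantFamily r S b H)
    (hb : ∀ k, Continuous (b k)) (i : ℤ) (a : ℂ) :
    Continuous fun x => H x (lp.single 2 i a) := by
  simp only [hH.apply_single]
  have hblock := fun k n => continuous_blockEval r (hb k) n
  have hsingle := fun n => (lp.isometry_single (E := fun _ : ℤ => ℂ) (p := 2) n).continuous
  fun_prop

theorem spectrum_subset_of_mem_closure_orbit (hH : IsPatternEquivariantFamily r S b H)
    (hb : ∀ k, Continuous (b k)) {x x' : ℤ → A}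
    (hx' : x' ∈ closure (Set.range fun m : ℤ => shiftBy m x)) :
    spectrum ℂ (H x') ⊆ spectrum ℂ (H x) := by
  intro z hz
  by_contra hzx
  set R : (ℤ → A) → ℓ2Z →L[ℂ] ℓ2Z := fun y => algebraMap ℂ _ z - H y
  have hR : ∀ y, IsStarNormal (R y) := fun y =>
    (hH.isSelfAdjoint y).isStarNormal.algebraMap_sub z
  obtain ⟨K, hK⟩ :=
    (ContinuousLinearMap.IsStarNormal.isUnit_iff_exists_antilipschitzWith (hR x)).1
      (spectrum.notMem_iff.1 hzx)
  have hK_orbit : ∀ m, AntilipschitzWith K (R (shiftBy m x)) := by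
    intro m
    have : ⇑(R (shiftBy m x)) = shiftℓ2 m ∘ R x ∘ (shiftℓ2 m).symm := by
      funext ψ
      simp [R, hH.apply_shiftBy, Algebra.algebraMap_eq_smul_one]
    exact this ▸ hK.conj_linearIsometryEquiv (shiftℓ2 m)
  have hdense : Dense {ψ | Continuous fun y => R y ψ} :=
    lp.dense_setOf_continuous_apply (by simp) fun i a =>
      continuous_const.sub (hH.continuous_apply_single hb i a)
  have hK' : AntilipschitzWith K (R x') :=
    antilipschitzWith_of_mem_closure hdense (by rintro _ ⟨m, rfl⟩; exact hK_orbit m) hx'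
  exact spectrum.mem_iff.1 hz
    ((ContinuousLinearMap.IsStarNormal.isUnit_iff_exists_antilipschitzWith (hR x')).2 ⟨K, hK'⟩)

end IsPatternEquivariantFamily

theorem spe_family_spectrum_orbit_closure_general {A : Set ℝ}
    (r : ℕ) (S : Finset ℕ)
    (b : ℕ → (Fin (2 * r + 1) → A) → ℂ) (hb : ∀ k, Continuous (b k))
    (H : (ℤ → A) → (ℓ2Z →L[ℂ] ℓ2Z))
    (hH : ∀ (x : ℤ → A) (ψ : ℓ2Z) (n : ℤ),
      (H x ψ) n = ∑ k ∈ S, (blockEval r (b k) x n * ψ (n + k)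
        + conj (blockEval r (b k) x (n - k)) * ψ (n - k))) :
    (∀ x x' : ℤ → A, x' ∈ closure (Set.range fun m : ℤ => shiftBy m x) →
      spectrum ℂ (H x') ⊆ spectrum ℂ (H x)) ∧
    (∀ X : Set (ℤ → A), IsClosed X → (∀ x ∈ X, shiftBy 1 x ∈ X) →
      (∀ x ∈ X, ∀ y ∈ X, y ∈ closure (Set.range fun m : ℤ => shiftBy m x)) →
      ∀ x ∈ X, ∀ y ∈ X, spectrum ℂ (H x) = spectrum ℂ (H y)) := by
  have hH' : IsPatternEquivariantFamily r S b H := hH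
  refine ⟨fun x x' hx' => hH'.spectrum_subset_of_mem_closure_orbit hb hx', ?_⟩
  intro X _ _ hmin x hx y hy
  exact (hH'.spectrum_subset_of_mem_closure_orbit hb (hmin y hy x hx)).antisymm
    (hH'.spectrum_subset_of_mem_closure_orbit hb (hmin x hx y hy))

/-- For a strongly pattern equivariant family of Schrödinger operators: if `x'`
belongs to the closure of the shift orbit of `x`, then `spec(H_{x'}) ⊆ spec(H_x)`;
consequently on a minimal closed shift-invariant subshift `X` (all orbits of points of
`X` are dense in `X`) the spectrum is constant. -/
theorem spe_family_spectrum_orbit_closure {A : Set ℝ} (hA : IsCompact A)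
    (r : ℕ) (S : Finset ℕ) (hS : ∀ k ∈ S, 0 < k)
    (b : ℕ → (Fin (2 * r + 1) → A) → ℂ) (hb : ∀ k, Continuous (b k))
    (H : (ℤ → A) → (ℓ2Z →L[ℂ] ℓ2Z))
    (hH : ∀ (x : ℤ → A) (ψ : ℓ2Z) (n : ℤ),
      (H x ψ) n = ∑ k ∈ S, (blockEval r (b k) x n * ψ (n + k)
        + conj (blockEval r (b k) x (n - k)) * ψ (n - k))) :
    (∀ x x' : ℤ → A, x' ∈ closure (Set.range fun m : ℤ => shiftBy m x) →
      spectrum ℂ (H x') ⊆ spectrum ℂ (H x)) ∧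
    (∀ X : Set (ℤ → A), IsClosed X → (∀ x ∈ X, shiftBy 1 x ∈ X) →
      (∀ x ∈ X, ∀ y ∈ X, y ∈ closure (Set.range fun m : ℤ => shiftBy m x)) →
      ∀ x ∈ X, ∀ y ∈ X, spectrum ℂ (H x) = spectrum ℂ (H y)) :=
  spe_family_spectrum_orbit_closure_general r S b hb H hH

end
end

section
/- Let H be a bounded self-adjoint operator on a Hilbert space, Δ ⊂ ℝ a closed interval disjoint from spec(H), and H' a self-adjoint finite rank perturbation of H of rank k. Then spec(H') ∩ Δ consists of at most k eigenvalues counted with multiplicity. -/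
/-!
Write `V = H' - H`. For `μ ∈ Δ` the operator `μ - H` is invertible and
`μ - H' = (μ - H)(1 - (μ - H)⁻¹ V)` with `(μ - H)⁻¹ V` of finite rank, hence compact; by the
Fredholm alternative, `μ - H'` fails to be invertible only if it has a kernel.

Let `Δ = [c - r, c + r]`. Since `spec H` is compact and misses `Δ`, it stays at distance `d > r`
from `c`, so `‖(c - H) x‖ ≥ d ‖x‖`. On the span `W` of the eigenspaces of `H'` for eigenvalues in
`Δ`, orthogonality of the eigenspaces gives `‖(c - H') x‖ ≤ r ‖x‖`. Hence `V` is injective on `W`,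
and `dim W ≤ rank V = k`.
-/

open Metric Module End

theorem ContinuousLinearMap.isCompactOperator_of_finiteDimensional_range
    {𝕜 E F : Type*} [NontriviallyNormedField 𝕜] [ProperSpace 𝕜]
    [NormedAddCommGroup E] [NormedSpace 𝕜 E] [NormedAddCommGroup F] [NormedSpace 𝕜 F]
    (f : E →L[𝕜] F) [FiniteDimensional 𝕜 (LinearMap.range (f : E →ₗ[𝕜] F))] :
    IsCompactOperator f :=
  have : ProperSpace (LinearMap.range (f : E →ₗ[𝕜] F)) := FiniteDimensional.proper 𝕜 _
  (isCompactOperator_of_locallyCompactSpace_dom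
    (f.codRestrict _ (LinearMap.mem_range_self (f : E →ₗ[𝕜] F)))).clm_comp
    (Submodule.subtypeL _)

theorem hasEigenvalue_of_mem_spectrum_of_isCompactOperator_sub
    {𝕜 X : Type*} [NontriviallyNormedField 𝕜] [NormedAddCommGroup X] [NormedSpace 𝕜 X]
    [CompleteSpace X]
    {A B : X →L[𝕜] X} (hBA : IsCompactOperator (B - A)) {μ : 𝕜}
    (hA : μ ∉ spectrum 𝕜 A) (hB : μ ∈ spectrum 𝕜 B) :
    HasEigenvalue (B : End 𝕜 X) μ := by
  obtain ⟨u, hu⟩ := spectrum.notMem_iff.mp hA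
  set K : X →L[𝕜] X := ↑u⁻¹ * (B - A)
  have huK : ↑u * K = B - A := by simp [K, ← mul_assoc]
  have hfactor : algebraMap 𝕜 _ μ - B = ↑u * (1 - K) := by
    rw [mul_sub, mul_one, huK, hu]; abel
  have hK1 : (1 : 𝕜) ∈ spectrum 𝕜 K := spectrum.mem_iff.mpr fun hunit =>
    spectrum.mem_iff.mp hB <| by
      rw [hfactor, ← map_one (algebraMap 𝕜 (X →L[𝕜] X))]
      exact u.isUnit.mul hunit
  have hK : IsCompactOperator K := hBA.clm_comp (↑u⁻¹ : X →L[𝕜] X)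
  obtain ⟨x, hx⟩ := (hK.hasEigenvalue_iff_mem_spectrum one_ne_zero).mpr hK1
    |>.exists_hasEigenvector
  refine hasEigenvalue_of_hasEigenvector ⟨mem_eigenspace_iff.mpr ?_, hx.2⟩
  have hKx : K x = x := by simpa using hx.apply_eq_smul
  have := congr($huK x)
  simp only [hu, Algebra.algebraMap_eq_smul_one] at this
  simpa [hKx] using this.symm

theorem ContinuousLinearMap.mul_norm_le_norm_smul_sub_apply
    {E : Type*} [NormedAddCommGroup E] [InnerProductSpace ℂ E] [CompleteSpace E]
    {A : E →L[ℂ] E} [IsStarNormal A] {ν : ℂ} {d : ℝ}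
    (h : ∀ w ∈ spectrum ℂ A, d ≤ dist ν w) (x : E) :
    d * ‖x‖ ≤ ‖ν • x - A x‖ := by
  rcases le_or_gt d 0 with hd | hd
  · exact (mul_nonpos_of_nonpos_of_nonneg hd (norm_nonneg x)).trans (norm_nonneg _)
  have hν : ∀ w ∈ spectrum ℂ A, ν - w ≠ 0 := fun w hw hνw => by
    have := h w hw
    rw [dist_eq_norm, hνw, norm_zero] at this
    linarith
  set R := cfc (fun w => (ν - w)⁻¹) A
  have hR : ∀ y, R (ν • y - A y) = y := by
    have hcont : ContinuousOn (fun w => ν - w) (spectrum ℂ A) := by fun_prop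
    have hsub : cfc (fun w => ν - w) A = ν • 1 - A := by
      rw [cfc_sub _ _ A, cfc_const ν A, cfc_id' ℂ A, Algebra.algebraMap_eq_smul_one]
    have hRinv : R * (ν • 1 - A) = 1 := by
      rw [← hsub, ← cfc_mul (fun w => (ν - w)⁻¹) (fun w => ν - w) A (hcont.inv₀ hν) hcont,
        ← cfc_one ℂ A]
      exact cfc_congr fun w hw => inv_mul_cancel₀ (hν w hw)
    intro y
    simpa using congr($hRinv y)
  have hRnorm : ‖R‖ ≤ d⁻¹ := norm_cfc_le (inv_nonneg.mpr hd.le) fun w hw => by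
    rw [norm_inv, ← dist_eq_norm]
    exact inv_anti₀ hd (h w hw)
  calc d * ‖x‖ = d * ‖R (ν • x - A x)‖ := by rw [hR]
    _ ≤ d * (d⁻¹ * ‖ν • x - A x‖) := by gcongr; exact R.le_of_opNorm_le hRnorm _
    _ = ‖ν • x - A x‖ := by field_simp

theorem LinearMap.IsSymmetric.norm_smul_sub_apply_le_of_mem_iSup_eigenspace
    {𝕜 E : Type*} [RCLike 𝕜] [NormedAddCommGroup E] [InnerProductSpace 𝕜 E]
    {T : E →ₗ[𝕜] E} (hT : T.IsSymmetric) {c : 𝕜} {r : ℝ} {x : E}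
    (hx : x ∈ ⨆ μ ∈ closedBall c r, eigenspace T μ) : ‖c • x - T x‖ ≤ r * ‖x‖ := by
  rcases lt_or_ge r 0 with hr | hr
  · simp [closedBall_eq_empty.mpr hr] at hx
    simp [hx]
  rw [iSup_subtype', Submodule.mem_iSup_iff_exists_finsupp] at hx
  obtain ⟨f, hf, rfl⟩ := hx
  have hnorm := (hT.orthogonalFamily_eigenspaces.comp
    (Subtype.val_injective (p := (· ∈ closedBall c r)))).norm_sum
  have hTf : c • f.sum (fun _ y => y) - T (f.sum fun _ y => y) =
      ∑ μ ∈ f.support, (c - μ) • f μ := by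
    simp only [Finsupp.sum, map_sum, Finset.smul_sum, ← Finset.sum_sub_distrib, sub_smul,
      fun μ => mem_eigenspace_iff.mp (hf μ)]
  have hnorm_smul : ‖∑ μ ∈ f.support, (c - μ) • f μ‖ ^ 2 =
      ∑ μ ∈ f.support, ‖(c - μ) • f μ‖ ^ 2 :=
    hnorm (fun μ => ⟨(c - μ) • f μ, Submodule.smul_mem _ _ (hf μ)⟩) _
  have hnorm_sum : ‖∑ μ ∈ f.support, f μ‖ ^ 2 = ∑ μ ∈ f.support, ‖f μ‖ ^ 2 :=
    hnorm (fun μ => ⟨f μ, hf μ⟩) _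
  rw [← sq_le_sq₀ (norm_nonneg _) (by positivity), hTf, mul_pow, Finsupp.sum, hnorm_smul,
    hnorm_sum, Finset.mul_sum]
  gcongr with μ
  rw [norm_smul, mul_pow]
  gcongr
  rw [← dist_eq_norm, dist_comm]
  exact μ.2

theorem IsSelfAdjoint.exists_lt_forall_le_dist_spectrum {A : Type*} [CStarAlgebra A] {a : A}
    (ha : IsSelfAdjoint a) {c r : ℝ} (h : ∀ t ∈ closedBall c r, (t : ℂ) ∉ spectrum ℂ a) :
    ∃ d, r < d ∧ ∀ w ∈ spectrum ℂ a, d ≤ dist (c : ℂ) w := by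
  refine (spectrum.isCompact a).exists_forall_le' (by fun_prop) fun w hw => ?_
  obtain ⟨t, rfl⟩ : ∃ t : ℝ, (t : ℂ) = w := ⟨w.re, (ha.mem_spectrum_eq_re hw).symm⟩
  by_contra! hle
  refine h t ?_ hw
  rwa [mem_closedBall, dist_comm, ← Complex.isometry_ofReal.dist_eq]

theorem IsSelfAdjoint.disjoint_iSup_eigenspace_ker_sub
    {E : Type*} [NormedAddCommGroup E] [InnerProductSpace ℂ E] [CompleteSpace E]
    {A B : E →L[ℂ] E} [IsStarNormal A] (hB : IsSelfAdjoint B) {c : ℂ} {r d : ℝ} (hrd : r < d)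
    (hd : ∀ w ∈ spectrum ℂ A, d ≤ dist c w) :
    Disjoint (⨆ μ ∈ closedBall c r, eigenspace (B : E →ₗ[ℂ] E) μ)
      (LinearMap.ker ((B - A : E →L[ℂ] E) : E →ₗ[ℂ] E)) := by
  refine Submodule.disjoint_def.mpr fun x hx hker => ?_
  have hAB : A x = B x := (sub_eq_zero.mp hker).symm
  have := (A.mul_norm_le_norm_smul_sub_apply hd x).trans
    (hAB ▸ hB.isSymmetric.norm_smul_sub_apply_le_of_mem_iSup_eigenspace hx)
  exact norm_le_zero_iff.mp (by nlinarith [norm_nonneg x])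

section DisjointKer

variable {K V V₂ : Type*} [DivisionRing K] [AddCommGroup V] [Module K V] [AddCommGroup V₂]
  [Module K V₂] {f : V →ₗ[K] V₂} [FiniteDimensional K (LinearMap.range f)] {W : Submodule K V}

theorem Submodule.finiteDimensional_of_disjoint_ker (h : Disjoint W (LinearMap.ker f)) :
    FiniteDimensional K W :=
  .of_injective (f.rangeRestrict.domRestrict W)
    (by rwa [LinearMap.injective_domRestrict_iff, LinearMap.ker_rangeRestrict])

theorem Submodule.finrank_le_finrank_range_of_disjoint_ker (h : Disjoint W (LinearMap.ker f)) :
    finrank K W ≤ finrank K (LinearMap.range f) :=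
  LinearMap.finrank_le_finrank_of_injective (f := f.rangeRestrict.domRestrict W)
    (by rwa [LinearMap.injective_domRestrict_iff, LinearMap.ker_rangeRestrict])

end DisjointKer

theorem finite_rank_perturbation_eigenvalues_in_gap_general
    {E : Type*} [NormedAddCommGroup E] [InnerProductSpace ℂ E] [CompleteSpace E]
    (H H' : E →L[ℂ] E) (hH : IsSelfAdjoint H) (hH' : IsSelfAdjoint H')
    (k : ℕ)
    (hfin : FiniteDimensional ℂ (LinearMap.range ((H' - H : E →L[ℂ] E) : E →ₗ[ℂ] E)))
    (hrank : Module.finrank ℂ (LinearMap.range ((H' - H : E →L[ℂ] E) : E →ₗ[ℂ] E)) = k)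
    (E₀ E₁ : ℝ)
    (hgap : ∀ μ ∈ Set.Icc E₀ E₁, (μ : ℂ) ∉ spectrum ℂ H) :
    (∀ μ ∈ Set.Icc E₀ E₁, (μ : ℂ) ∈ spectrum ℂ H' →
        Module.End.HasEigenvalue (H' : E →ₗ[ℂ] E) (μ : ℂ)) ∧
    FiniteDimensional ℂ
      ↥(⨆ μ ∈ Set.Icc E₀ E₁, Module.End.eigenspace (H' : E →ₗ[ℂ] E) (μ : ℂ)) ∧
    Module.finrank ℂ
      ↥(⨆ μ ∈ Set.Icc E₀ E₁, Module.End.eigenspace (H' : E →ₗ[ℂ] E) (μ : ℂ)) ≤ k := by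
  refine ⟨fun μ hμ hμH' => ?_, ?_⟩
  · exact hasEigenvalue_of_mem_spectrum_of_isCompactOperator_sub
      (H' - H).isCompactOperator_of_finiteDimensional_range (hgap μ hμ) hμH'
  rw [Real.Icc_eq_closedBall] at hgap ⊢
  obtain ⟨d, hrd, hd⟩ := hH.exists_lt_forall_le_dist_spectrum hgap
  have := hH.isStarNormal
  set c := (E₀ + E₁) / 2
  set r := (E₁ - E₀) / 2
  have hW : (⨆ μ ∈ closedBall c r, eigenspace (H' : E →ₗ[ℂ] E) (μ : ℂ)) ≤
      ⨆ μ ∈ closedBall (c : ℂ) r, eigenspace (H' : E →ₗ[ℂ] E) μ :=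
    iSup₂_le fun μ hμ => le_iSup₂_of_le (μ : ℂ)
      (by rwa [mem_closedBall, Complex.isometry_ofReal.dist_eq]) le_rfl
  have hdisj := (hH'.disjoint_iSup_eigenspace_ker_sub hrd hd).mono_left hW
  exact ⟨Submodule.finiteDimensional_of_disjoint_ker hdisj,
    hrank ▸ Submodule.finrank_le_finrank_range_of_disjoint_ker hdisj⟩

/-- Let `H` be a bounded self-adjoint operator on a Hilbert space, `Δ = [E₀, E₁]` a
closed interval disjoint from `spec(H)`, and `H'` a self-adjoint perturbation of `H` of
finite rank `k`.  Then the spectrum of `H'` in `Δ` consists of eigenvalues, at most `k`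
of them counted with multiplicity. -/
theorem finite_rank_perturbation_eigenvalues_in_gap
    {E : Type*} [NormedAddCommGroup E] [InnerProductSpace ℂ E] [CompleteSpace E]
    (H H' : E →L[ℂ] E) (hH : IsSelfAdjoint H) (hH' : IsSelfAdjoint H')
    (k : ℕ)
    (hfin : FiniteDimensional ℂ (LinearMap.range ((H' - H : E →L[ℂ] E) : E →ₗ[ℂ] E)))
    (hrank : Module.finrank ℂ (LinearMap.range ((H' - H : E →L[ℂ] E) : E →ₗ[ℂ] E)) = k)
    (E₀ E₁ : ℝ) (hE : E₀ ≤ E₁)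
    (hgap : ∀ μ ∈ Set.Icc E₀ E₁, (μ : ℂ) ∉ spectrum ℂ H) :
    (∀ μ ∈ Set.Icc E₀ E₁, (μ : ℂ) ∈ spectrum ℂ H' →
        Module.End.HasEigenvalue (H' : E →ₗ[ℂ] E) (μ : ℂ)) ∧
    FiniteDimensional ℂ
      ↥(⨆ μ ∈ Set.Icc E₀ E₁, Module.End.eigenspace (H' : E →ₗ[ℂ] E) (μ : ℂ)) ∧
    Module.finrank ℂ
      ↥(⨆ μ ∈ Set.Icc E₀ E₁, Module.End.eigenspace (H' : E →ₗ[ℂ] E) (μ : ℂ)) ≤ k :=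
  finite_rank_perturbation_eigenvalues_in_gap_general H H' hH hH' k hfin hrank E₀ E₁ hgap
end
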